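/- arXiv:0912.3282 — 3 statements merged into one kernel-verified Lean document; each statement's English description precedes it below -/
import Mathlib

section
/- Let c > 0, N₀ ≥ 0 be real numbers and let W₀ ≥ 6 be a natural number. Suppose A : ℕ → ℝ satisfies: A(n) ≥ 0 for all n; A(n) ≤ N₀ for all n ≤ W₀; and for every n > W₀ there exists a natural number k with (n:ℝ)/6 ≤ k and (k:ℝ) ≤ 5·n/6 such that A(n) ≤ (Real.sqrt (A(k) + A(n−k)) + c · Real.sqrt (6·n) · Real.log n)². Then there exists a constant d > 0 such that A(n) ≤ d · n · (Real.log n)⁴ for all natural numbers n ≥ 2. -/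
/-!
Prove `√(A n) ≤ D √n (log n)²` by strong induction. Both parts of a balanced split have size at
most `5n/6`, so their logarithms are at most `log n - ε` with `ε = log (6/5)`, and hence
`√(A k + A (n-k)) ≤ D √n (log n - ε)²`. Lowering `log n` to `log n - ε` frees
`D √n ((log n)² - (log n - ε)²) ≥ D ε √n log n`, which pays for the additive term
`c √(6n) log n` as soon as `√6 c ≤ D ε`.
-/

open Real

lemma log_le_sub_log_six_fifths {m x : ℝ} (hm : 0 < m) (h : m ≤ 5 * x / 6) :
    log m ≤ log x - log (6 / 5) := by
  have hx : 0 < x := by linarith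
  calc log m ≤ log (x / (6 / 5)) := log_le_log hm (by linarith)
    _ = log x - log (6 / 5) := log_div hx.ne' (by norm_num)

lemma two_mul_log_two_pow_four_le {x : ℝ} (hx : 2 ≤ x) : 2 * log 2 ^ 4 ≤ x * log x ^ 4 := by
  have hlog : log 2 ≤ log x := log_le_log (by norm_num) hx
  have hlog2 : 0 ≤ log 2 := (log_pos one_lt_two).le
  exact mul_le_mul hx (pow_le_pow_left₀ hlog2 hlog 4) (by positivity) (by linarith)

lemma mul_mul_log_pow_four_le {a x M : ℝ} (ha : 0 ≤ a) (hx : 1 ≤ x) (h : log x ≤ M) :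
    a * x * log x ^ 4 ≤ a * x * M ^ 4 :=
  mul_le_mul_of_nonneg_left (pow_le_pow_left₀ (log_nonneg hx) h 4) (by positivity)

lemma sq_sqrt_add_mul_log_le {S x L ε D c : ℝ} (hx : 0 ≤ x) (hε : 0 ≤ ε)
    (hεL : ε ≤ L) (hD : 0 ≤ D) (hc : 0 ≤ c) (hDc : √6 * c ≤ D * ε)
    (hS : S ≤ D ^ 2 * x * (L - ε) ^ 4) :
    (√S + c * √(6 * x) * L) ^ 2 ≤ D ^ 2 * x * L ^ 4 := by
  have hL : 0 ≤ L := hε.trans hεL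
  have hsqrtS : √S ≤ D * √x * (L - ε) ^ 2 :=
    sqrt_le_iff.mpr ⟨by positivity, by rw [mul_pow, mul_pow, sq_sqrt hx]; linarith⟩
  have hterm : c * √(6 * x) * L ≤ D * √x * (ε * L) :=
    calc c * √(6 * x) * L = √6 * c * (√x * L) := by rw [sqrt_mul (by norm_num)]; ring
      _ ≤ D * ε * (√x * L) := mul_le_mul_of_nonneg_right hDc (by positivity)
      _ = D * √x * (ε * L) := by ring
  have hgain : D * √x * ((L - ε) ^ 2 + ε * L) ≤ D * √x * L ^ 2 :=
    mul_le_mul_of_nonneg_left (by nlinarith) (by positivity)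
  calc (√S + c * √(6 * x) * L) ^ 2 ≤ (D * √x * L ^ 2) ^ 2 :=
        pow_le_pow_left₀ (by positivity) (by linarith) 2
    _ = D ^ 2 * x * L ^ 4 := by rw [mul_pow, mul_pow, sq_sqrt hx]; ring

theorem le_mul_log_pow_four_of_balanced_split {A : ℕ → ℝ} {c N₀ D : ℝ} {W₀ : ℕ}
    (hW₀ : 6 ≤ W₀) (hc : 0 ≤ c) (hD : 0 ≤ D) (hDc : √6 * c ≤ D * log (6 / 5))
    (hDN : N₀ ≤ D ^ 2 * (2 * log 2 ^ 4))
    (hbase : ∀ n : ℕ, n ≤ W₀ → A n ≤ N₀)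
    (hrec : ∀ n : ℕ, W₀ < n → ∃ k : ℕ, (n : ℝ) / 6 ≤ k ∧ (k : ℝ) ≤ 5 * n / 6 ∧
      A n ≤ (√(A k + A (n - k)) + c * √(6 * n) * log n) ^ 2) :
    ∀ n : ℕ, 2 ≤ n → A n ≤ D ^ 2 * n * log n ^ 4 := by
  intro n
  induction n using Nat.strong_induction_on with
  | _ n ih =>
  intro hn
  have hn' : (2 : ℝ) ≤ n := by exact_mod_cast hn
  rcases le_or_gt n W₀ with hnW | hnW
  · calc A n ≤ D ^ 2 * (2 * log 2 ^ 4) := (hbase n hnW).trans hDN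
      _ ≤ D ^ 2 * (n * log n ^ 4) :=
        mul_le_mul_of_nonneg_left (two_mul_log_two_pow_four_le hn') (by positivity)
      _ = D ^ 2 * n * log n ^ 4 := by ring
  obtain ⟨k, hk₁, hk₂, hA⟩ := hrec n hnW
  have hn7 : (7 : ℝ) ≤ n := by exact_mod_cast (show 7 ≤ n by omega)
  have hk : 2 ≤ k := by
    have : (1 : ℝ) < k := by linarith
    exact_mod_cast this
  have hkn : k < n := by exact_mod_cast (show (k : ℝ) < n by linarith)
  have hcast : ((n - k : ℕ) : ℝ) = n - k := Nat.cast_sub hkn.le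
  have hnk : 2 ≤ n - k := by
    have : (1 : ℝ) < ((n - k : ℕ) : ℝ) := by rw [hcast]; linarith
    exact_mod_cast this
  have hsplit : A k + A (n - k) ≤ D ^ 2 * n * (log n - log (6 / 5)) ^ 4 := by
    have hAk := (ih k hkn hk).trans <| mul_mul_log_pow_four_le (sq_nonneg D)
      (by exact_mod_cast hk.trans' one_le_two) (log_le_sub_log_six_fifths (by positivity) hk₂)
    have hAnk := (ih (n - k) (by omega) hnk).trans <| mul_mul_log_pow_four_le (sq_nonneg D)
      (by exact_mod_cast hnk.trans' one_le_two)
      (log_le_sub_log_six_fifths (x := n) (by positivity) (by rw [hcast]; linarith))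
    rw [hcast] at hAnk
    linear_combination hAk + hAnk
  exact hA.trans <| sq_sqrt_add_mul_log_le (by positivity) (log_pos (by norm_num)).le
    (log_le_log (by norm_num) (by linarith)) hD hc hDc hsplit

theorem area_recurrence_bound_general (c N₀ : ℝ) (hc : 0 < c)
    (W₀ : ℕ) (hW₀ : 6 ≤ W₀) (A : ℕ → ℝ)
    (hbase : ∀ n : ℕ, n ≤ W₀ → A n ≤ N₀)
    (hrec : ∀ n : ℕ, W₀ < n → ∃ k : ℕ, (n : ℝ) / 6 ≤ (k : ℝ) ∧
      (k : ℝ) ≤ 5 * (n : ℝ) / 6 ∧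
      A n ≤ (Real.sqrt (A k + A (n - k)) +
        c * Real.sqrt (6 * (n : ℝ)) * Real.log n) ^ 2) :
    ∃ d : ℝ, 0 < d ∧ ∀ n : ℕ, 2 ≤ n → A n ≤ d * (n : ℝ) * (Real.log n) ^ 4 := by
  have hε : 0 < log (6 / 5) := log_pos (by norm_num)
  have hX : 0 < 2 * log 2 ^ 4 := by have := log_pos one_lt_two; positivity
  set D := max 1 (max (√6 * c / log (6 / 5)) (N₀ / (2 * log 2 ^ 4)))
  have hD : 1 ≤ D := le_max_left _ _
  have hDc : √6 * c ≤ D * log (6 / 5) :=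
    (div_le_iff₀ hε).mp <| (le_max_left _ _).trans (le_max_right _ _)
  have hDN : N₀ ≤ D ^ 2 * (2 * log 2 ^ 4) := by
    have hND : N₀ / (2 * log 2 ^ 4) ≤ D := (le_max_right _ _).trans (le_max_right _ _)
    exact (div_le_iff₀ hX).mp (by nlinarith)
  exact ⟨D ^ 2, by positivity, le_mul_log_pow_four_of_balanced_split hW₀ hc.le
    (by linarith) hDc hDN hbase hrec⟩

/-- Solution of the nonlinear divide-and-conquer recurrence for the embedding
area: if `A n ≤ N₀` below the threshold `W₀`, and for `n > W₀` there is a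
balanced split `k` with `n/6 ≤ k ≤ 5n/6` such that
`A n ≤ (√(A k + A (n−k)) + c·√(6n)·log n)²`, then `A n = O(n·(log n)⁴)`. -/
theorem area_recurrence_bound (c N₀ : ℝ) (hc : 0 < c) (hN₀ : 0 ≤ N₀)
    (W₀ : ℕ) (hW₀ : 6 ≤ W₀) (A : ℕ → ℝ)
    (hnonneg : ∀ n : ℕ, 0 ≤ A n)
    (hbase : ∀ n : ℕ, n ≤ W₀ → A n ≤ N₀)
    (hrec : ∀ n : ℕ, W₀ < n → ∃ k : ℕ, (n : ℝ) / 6 ≤ (k : ℝ) ∧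
      (k : ℝ) ≤ 5 * (n : ℝ) / 6 ∧
      A n ≤ (Real.sqrt (A k + A (n - k)) +
        c * Real.sqrt (6 * (n : ℝ)) * Real.log n) ^ 2) :
    ∃ d : ℝ, 0 < d ∧ ∀ n : ℕ, 2 ≤ n → A n ≤ d * (n : ℝ) * (Real.log n) ^ 4 :=
  area_recurrence_bound_general c N₀ hc W₀ hW₀ A hbase hrec
end

section
/- Let c > 0, N₀ ≥ 0 be real numbers and let W₀ ≥ 6 be a natural number. Suppose A, B : ℕ → ℝ satisfy: A(n) ≥ 0 and B(n) ≥ 0 for all n; A(n) ≤ N₀ and B(n) = Real.sqrt N₀ for all n ≤ W₀; for every n > W₀ and every natural number j with (n:ℝ)/6 ≤ j and (j:ℝ) ≤ 5·n/6 one has B(n) ≥ B(j) + Real.sqrt 6 · c · Real.log n; and for every n > W₀ there exists a natural number k with (n:ℝ)/6 ≤ k and (k:ℝ) ≤ 5·n/6 such that A(n) ≤ (Real.sqrt (A(k) + A(n−k)) + c · Real.sqrt (6·n) · Real.log n)². Then A(n) ≤ n · (B(n))² for every natural number n ≥ 1. -/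
/-!
Strong induction on `n`. Below the threshold, `A n ≤ N₀ = (B n)²`. Above it, split `n = k + (n - k)`
along the balanced split of the recurrence for `A`; with `M = max (B k) (B (n - k))` the induction
hypothesis gives `A k + A (n - k) ≤ k (B k)² + (n - k) (B (n - k))² ≤ n M²`, hence
`√(A k + A (n - k)) + c √(6n) log n ≤ √n (M + √6 c log n) ≤ √n B n`, because both parts of the
split are balanced and the recurrence for `B` applies to each.
-/

open Real

lemma mul_sq_add_mul_sq_le_max_sq {a b x y : ℝ} (ha : 0 ≤ a) (hb : 0 ≤ b) (hx : 0 ≤ x)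
    (hy : 0 ≤ y) : x * a ^ 2 + y * b ^ 2 ≤ (x + y) * max a b ^ 2 := by
  have hfa : a ^ 2 ≤ max a b ^ 2 := by gcongr; exact le_max_left a b
  have hfb : b ^ 2 ≤ max a b ^ 2 := by gcongr; exact le_max_right a b
  nlinarith [mul_le_mul_of_nonneg_left hfa hx, mul_le_mul_of_nonneg_left hfb hy]

lemma le_mul_add_sq_of_le_sqrt_add_sq {a S M t n : ℝ} (hn : 0 ≤ n) (hM : 0 ≤ M) (ht : 0 ≤ t)
    (hS : S ≤ n * M ^ 2) (ha : a ≤ (√S + √n * t) ^ 2) : a ≤ n * (M + t) ^ 2 := by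
  have hsqrt : √S ≤ √n * M := by
    simpa only [sqrt_mul hn, sqrt_sq hM] using sqrt_le_sqrt hS
  calc a ≤ (√S + √n * t) ^ 2 := ha
    _ ≤ (√n * M + √n * t) ^ 2 := by gcongr
    _ = n * (M + t) ^ 2 := by rw [← mul_add, mul_pow, sq_sqrt hn]

section BalancedSplit

variable {n k : ℕ}

lemma pos_and_lt_of_balanced (hlo : (n : ℝ) / 6 ≤ k) (hhi : (k : ℝ) ≤ 5 * n / 6) (hn : 0 < n) :
    0 < k ∧ k < n := by
  have hnR : (0 : ℝ) < n := by exact_mod_cast hn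
  exact ⟨by exact_mod_cast (by linarith : (0 : ℝ) < k),
    by exact_mod_cast (by linarith : (k : ℝ) < n)⟩

lemma balanced_sub (hlo : (n : ℝ) / 6 ≤ k) (hhi : (k : ℝ) ≤ 5 * n / 6) :
    (n : ℝ) / 6 ≤ ((n - k : ℕ) : ℝ) ∧ ((n - k : ℕ) : ℝ) ≤ 5 * n / 6 := by
  have hkn : k ≤ n := by exact_mod_cast (by linarith : (k : ℝ) ≤ n)
  rw [Nat.cast_sub hkn]
  constructor <;> linarith

end BalancedSplit

theorem area_le_n_mul_B_sq_general (c N₀ : ℝ) (hc : 0 < c) (hN₀ : 0 ≤ N₀)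
    (W₀ : ℕ) (A B : ℕ → ℝ)
    (hBnonneg : ∀ n : ℕ, 0 ≤ B n)
    (hAbase : ∀ n : ℕ, n ≤ W₀ → A n ≤ N₀)
    (hBbase : ∀ n : ℕ, n ≤ W₀ → B n = Real.sqrt N₀)
    (hBrec : ∀ n : ℕ, W₀ < n → ∀ j : ℕ, (n : ℝ) / 6 ≤ (j : ℝ) →
      (j : ℝ) ≤ 5 * (n : ℝ) / 6 →
      B j + Real.sqrt 6 * c * Real.log n ≤ B n)
    (hArec : ∀ n : ℕ, W₀ < n → ∃ k : ℕ, (n : ℝ) / 6 ≤ (k : ℝ) ∧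
      (k : ℝ) ≤ 5 * (n : ℝ) / 6 ∧
      A n ≤ (Real.sqrt (A k + A (n - k)) +
        c * Real.sqrt (6 * (n : ℝ)) * Real.log n) ^ 2) :
    ∀ n : ℕ, 1 ≤ n → A n ≤ (n : ℝ) * (B n) ^ 2 := by
  intro n
  induction n using Nat.strong_induction_on with
  | _ n ih =>
    intro hn
    have hnR : (1 : ℝ) ≤ n := by exact_mod_cast hn
    rcases le_or_gt n W₀ with hbase | hrec
    · calc A n ≤ (B n) ^ 2 := by rw [hBbase n hbase, sq_sqrt hN₀]; exact hAbase n hbase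
        _ ≤ n * (B n) ^ 2 := le_mul_of_one_le_left (sq_nonneg _) hnR
    obtain ⟨k, hlo, hhi, hAn⟩ := hArec n hrec
    obtain ⟨hk, hkn⟩ := pos_and_lt_of_balanced hlo hhi hn
    obtain ⟨hlo', hhi'⟩ := balanced_sub hlo hhi
    obtain ⟨hk', hkn'⟩ := pos_and_lt_of_balanced hlo' hhi' hn
    set t := √6 * c * log n
    have ht : 0 ≤ t := by have := log_nonneg hnR; positivity
    have hsum : A k + A (n - k) ≤ n * max (B k) (B (n - k)) ^ 2 := by
      have := mul_sq_add_mul_sq_le_max_sq (hBnonneg k) (hBnonneg (n - k))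
        (Nat.cast_nonneg k) (Nat.cast_nonneg (n - k))
      rw [← Nat.cast_add, Nat.add_sub_cancel' hkn.le] at this
      linarith [ih k hkn hk, ih (n - k) hkn' hk']
    have hstep : c * √(6 * n) * log n = √n * t := by rw [sqrt_mul (by norm_num)]; ring
    have hmax : max (B k) (B (n - k)) + t ≤ B n := by
      rw [← le_sub_iff_add_le]
      exact max_le (by linarith [hBrec n hrec k hlo hhi])
        (by linarith [hBrec n hrec (n - k) hlo' hhi'])
    calc A n ≤ n * (max (B k) (B (n - k)) + t) ^ 2 :=
          le_mul_add_sq_of_le_sqrt_add_sq (Nat.cast_nonneg n) (le_max_of_le_left (hBnonneg k))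
            ht hsum (hstep ▸ hAn)
      _ ≤ n * (B n) ^ 2 := by gcongr; exact add_nonneg (le_max_of_le_left (hBnonneg k)) ht

/-- Key induction comparing the divide-and-conquer area recurrence `A` with the
auxiliary function `B`: under the stated base-case and recurrence hypotheses,
`A n ≤ n·(B n)²` for every `n ≥ 1`. -/
theorem area_le_n_mul_B_sq (c N₀ : ℝ) (hc : 0 < c) (hN₀ : 0 ≤ N₀)
    (W₀ : ℕ) (hW₀ : 6 ≤ W₀) (A B : ℕ → ℝ)
    (hAnonneg : ∀ n : ℕ, 0 ≤ A n) (hBnonneg : ∀ n : ℕ, 0 ≤ B n)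
    (hAbase : ∀ n : ℕ, n ≤ W₀ → A n ≤ N₀)
    (hBbase : ∀ n : ℕ, n ≤ W₀ → B n = Real.sqrt N₀)
    (hBrec : ∀ n : ℕ, W₀ < n → ∀ j : ℕ, (n : ℝ) / 6 ≤ (j : ℝ) →
      (j : ℝ) ≤ 5 * (n : ℝ) / 6 →
      B j + Real.sqrt 6 * c * Real.log n ≤ B n)
    (hArec : ∀ n : ℕ, W₀ < n → ∃ k : ℕ, (n : ℝ) / 6 ≤ (k : ℝ) ∧
      (k : ℝ) ≤ 5 * (n : ℝ) / 6 ∧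
      A n ≤ (Real.sqrt (A k + A (n - k)) +
        c * Real.sqrt (6 * (n : ℝ)) * Real.log n) ^ 2) :
    ∀ n : ℕ, 1 ≤ n → A n ≤ (n : ℝ) * (B n) ^ 2 :=
  area_le_n_mul_B_sq_general c N₀ hc hN₀ W₀ A B hBnonneg hAbase hBbase hBrec hArec
end

section
/- Let R = [a,b] × [c,d] ⊆ ℝ² be a rectangle with a < b and c < d, and let x₁, …, xₙ, y₁, …, yₙ be 2n pairwise distinct points in the interior of R. Let Ω be a compact convex subset of the interior of R that contains none of the points x₁, …, xₙ, y₁, …, yₙ. Then there exist n continuous injective maps τ₁, …, τₙ : [0,1] → ℝ² such that for each j: τⱼ(0) = xⱼ, τⱼ(1) = yⱼ, the image of τⱼ is contained in R and is disjoint from Ω; and the images of τ₁, …, τₙ are pairwise disjoint. -/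
/-!
Fatten `Ω` to a closed convex set `O ⊆ int R` with nonempty interior that still avoids the `2n`
points, and pick a centre `ω ∈ int O` off the finitely many lines through two of the points, so
that the points are seen from `ω` in pairwise different directions. Polar coordinates around `ω`,
with the radius measured by the gauges of `O` and `R`, identify `R \ O` cut along a ray with part of
the strip `(-π, π] × (0, 1)`: the level `l` of the point `z` on the ray in direction `u` is given by
`z = u / ((1 - l) gauge O u + l gauge R u)`. The points then sit in the strip with pairwise distinct
abscissae, and they can be joined by graphs of continuous functions `H₀ > H₁ > ⋯`, each the minimum
of the earlier ones lowered a little and of a steep tent reaching down to its own two points. The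
`j`-th curve runs along the graph of `Hⱼ` between the angles of `xⱼ` and `yⱼ`.
-/

open Set Function Filter Topology MeasureTheory

def tent (K a u b v t : ℝ) : ℝ := min (u + K * |t - a|) (v + K * |t - b|)

theorem continuous_tent (K a u b v : ℝ) : Continuous (tent K a u b v) := by
  unfold tent; fun_prop

theorem tent_comm (K a u b v : ℝ) : tent K a u b v = tent K b v a u :=
  funext fun _ => min_comm _ _

theorem min_le_tent {K : ℝ} (hK : 0 ≤ K) (a u b v t : ℝ) : min u v ≤ tent K a u b v t :=
  min_le_min (le_add_of_nonneg_right (by positivity)) (le_add_of_nonneg_right (by positivity))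

theorem one_le_tent {K a u b v t : ℝ} (hu : 0 ≤ u) (hv : 0 ≤ v) (ha : 1 ≤ K * |t - a|)
    (hb : 1 ≤ K * |t - b|) : 1 ≤ tent K a u b v t :=
  le_min (by linarith) (by linarith)

theorem tent_apply_left {K a u b v : ℝ} (hab : 1 ≤ K * |a - b|) (hu : u ≤ 1) (hv : 0 ≤ v) :
    tent K a u b v a = u := by
  rw [tent, sub_self, abs_zero, mul_zero, add_zero]
  exact min_eq_left (by linarith)

section Stairs

variable {n : ℕ}

def stairs (f : Fin n → ℝ → ℝ) (μ : ℝ) (j : Fin n) (t : ℝ) : ℝ :=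
  min 1 ((Finset.Iic j).inf' Finset.nonempty_Iic fun i => f i t + μ * ((i : ℕ) + 1)) -
    μ * ((j : ℕ) + 1)

theorem continuous_stairs {f : Fin n → ℝ → ℝ} (hf : ∀ i, Continuous (f i)) (μ : ℝ) (j : Fin n) :
    Continuous (stairs f μ j) :=
  (continuous_const.min (Continuous.finset_inf'_apply _ fun i _ => by fun_prop)).sub
    continuous_const

theorem stairs_lt_one (f : Fin n → ℝ → ℝ) {μ : ℝ} (hμ : 0 < μ) (j : Fin n) (t : ℝ) :
    stairs f μ j t < 1 := by
  have hj : (0 : ℝ) < (j : ℕ) + 1 := by positivity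
  unfold stairs
  nlinarith [min_le_left 1
    ((Finset.Iic j).inf' Finset.nonempty_Iic fun i => f i t + μ * ((i : ℕ) + 1))]

theorem stairs_strictAnti (f : Fin n → ℝ → ℝ) {μ : ℝ} (hμ : 0 < μ) (t : ℝ) :
    StrictAnti fun j => stairs f μ j t := by
  intro i j hij
  have hle : (Finset.Iic j).inf' Finset.nonempty_Iic (fun k => f k t + μ * ((k : ℕ) + 1)) ≤
      (Finset.Iic i).inf' Finset.nonempty_Iic (fun k => f k t + μ * ((k : ℕ) + 1)) :=
    Finset.inf'_mono _ (Finset.Iic_subset_Iic.2 hij.le) _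
  have hij' : ((i : ℕ) : ℝ) < (j : ℕ) := by exact_mod_cast hij
  simp only [stairs]
  nlinarith [min_le_min_left 1 hle]

theorem stairs_pos {f : Fin n → ℝ → ℝ} {μ t : ℝ} (hμ : 0 ≤ μ) (h1 : μ * n < 1)
    (hf : ∀ i, μ * n < f i t) (j : Fin n) : 0 < stairs f μ j t := by
  have hj : μ * ((j : ℕ) + 1) ≤ μ * n :=
    mul_le_mul_of_nonneg_left (by exact_mod_cast j.isLt) hμ
  rw [stairs, sub_pos]
  refine lt_min (hj.trans_lt h1) ((Finset.lt_inf'_iff _).2 fun i _ => ?_)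
  nlinarith [hf i, (i : ℕ).cast_nonneg (α := ℝ)]

theorem stairs_eq {f : Fin n → ℝ → ℝ} {μ t u : ℝ} {j : Fin n} (hμ : 0 ≤ μ) (hfj : f j t = u)
    (hfi : ∀ i < j, 1 ≤ f i t) (hu : u + μ * n ≤ 1) : stairs f μ j t = u := by
  have hj : μ * ((j : ℕ) + 1) ≤ μ * n :=
    mul_le_mul_of_nonneg_left (by exact_mod_cast j.isLt) hμ
  have hinf : (Finset.Iic j).inf' Finset.nonempty_Iic (fun i => f i t + μ * ((i : ℕ) + 1)) =
      u + μ * ((j : ℕ) + 1) := by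
    refine le_antisymm (hfj ▸ Finset.inf'_le _ (Finset.mem_Iic.2 le_rfl)) (Finset.le_inf' _ _ ?_)
    intro i hi
    rcases (Finset.mem_Iic.1 hi).lt_or_eq with hij | rfl
    · nlinarith [hfi i hij, (i : ℕ).cast_nonneg (α := ℝ)]
    · rw [hfj]
  rw [stairs, hinf, min_eq_right (by linarith)]
  ring

theorem exists_strictAnti_interpolating {A B u v : Fin n → ℝ}
    (hAB : Injective (Sum.elim A B)) (hu : ∀ j, u j ∈ Ioo 0 1) (hv : ∀ j, v j ∈ Ioo 0 1) :
    ∃ H : Fin n → ℝ → ℝ, (∀ j, Continuous (H j)) ∧ (∀ j, H j (A j) = u j) ∧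
      (∀ j, H j (B j) = v j) ∧ (∀ j t, H j t ∈ Ioo 0 1) ∧ ∀ t, StrictAnti fun j => H j t := by
  obtain ⟨K, hK, hsep⟩ : ∃ K : ℝ, 0 ≤ K ∧ ∀ w w', w ≠ w' →
      1 ≤ K * |Sum.elim A B w - Sum.elim A B w'| := by
    refine ((eventually_ge_atTop 0).and
      (eventually_all.2 fun w => eventually_all.2 fun w' => ?_)).exists
    by_cases h : w = w'
    · exact Eventually.of_forall fun _ hne => absurd h hne
    · have hd : 0 < |Sum.elim A B w - Sum.elim A B w'| := abs_pos.2 (sub_ne_zero.2 (hAB.ne h))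
      exact ((tendsto_id.atTop_mul_const hd).eventually_ge_atTop 1).mono fun _ hK _ => hK
  have hsmall : ∀ c : ℝ, 0 < c → ∀ᶠ μ in 𝓝[>] (0 : ℝ), μ * n < c := fun c hc => by
    refine Tendsto.eventually_lt_const hc ?_
    simpa using ((continuous_mul_const (n : ℝ)).tendsto 0).mono_left nhdsWithin_le_nhds
  -- strand `j` is lowered by `μ * (j + 1) ≤ μ * n`, which must keep all levels inside `(0, 1)`
  obtain ⟨μ, hμ, hμ1, hμuv⟩ : ∃ μ : ℝ, 0 < μ ∧ μ * n < 1 ∧ ∀ j, μ * n < u j ∧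
      μ * n < 1 - u j ∧ μ * n < v j ∧ μ * n < 1 - v j :=
    (eventually_mem_nhdsWithin.and ((hsmall 1 one_pos).and (eventually_all.2 fun j =>
      (hsmall _ (hu j).1).and ((hsmall _ (sub_pos.2 (hu j).2)).and
        ((hsmall _ (hv j).1).and (hsmall _ (sub_pos.2 (hv j).2))))))).exists
  set f : Fin n → ℝ → ℝ := fun i => tent K (A i) (u i) (B i) (v i)
  have hfar : ∀ i j, i < j → 1 ≤ f i (A j) ∧ 1 ≤ f i (B j) := fun i j hij =>
    ⟨one_le_tent (hu i).1.le (hv i).1.le (hsep (.inl j) (.inl i) (by simpa using hij.ne'))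
        (hsep (.inl j) (.inr i) Sum.inl_ne_inr),
      one_le_tent (hu i).1.le (hv i).1.le (hsep (.inr j) (.inl i) Sum.inr_ne_inl)
        (hsep (.inr j) (.inr i) (by simpa using hij.ne'))⟩
  refine ⟨stairs f μ, fun j => continuous_stairs (fun i => continuous_tent _ _ _ _ _) μ j,
    fun j => stairs_eq hμ.le ?_ (fun i hij => (hfar i j hij).1) (by linarith [hμuv j]),
    fun j => stairs_eq hμ.le ?_ (fun i hij => (hfar i j hij).2) (by linarith [hμuv j]),
    fun j t => ⟨stairs_pos hμ.le hμ1 (fun i => ?_) j, stairs_lt_one f hμ j t⟩,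
    stairs_strictAnti f hμ⟩
  · exact tent_apply_left (hsep (.inl j) (.inr j) Sum.inl_ne_inr) (hu j).2.le (hv j).1.le
  · show tent K (A j) (u j) (B j) (v j) (B j) = v j
    rw [tent_comm]
    exact tent_apply_left (hsep (.inr j) (.inl j) Sum.inr_ne_inl) (hv j).2.le (hu j).1.le
  · exact (lt_min (hμuv i).1 (hμuv i).2.2.1).trans_le (min_le_tent hK _ _ _ _ _)

end Stairs

section ConvexSets

variable {E : Type*} [NormedAddCommGroup E] [NormedSpace ℝ E] {K L : Set E}

theorem gauge_lt_gauge_of_subset_interior (hK : Convex ℝ K) (hKc : IsClosed K) (hK0 : K ∈ 𝓝 0)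
    (hL : Bornology.IsBounded L) (hKL : K ⊆ interior L) {z : E} (hz : z ≠ 0) :
    0 < gauge L z ∧ gauge L z < gauge K z := by
  have hL0 : L ∈ 𝓝 (0 : E) := mem_of_superset hK0 (hKL.trans interior_subset)
  have hLpos : 0 < gauge L z :=
    (gauge_pos (absorbent_nhds_zero hL0) (NormedSpace.isVonNBounded_of_isBounded ℝ hL)).2 hz
  have hKpos : 0 < gauge K z :=
    hLpos.trans_le (gauge_mono (absorbent_nhds_zero hK0) (hKL.trans interior_subset) z)
  have hw : (gauge K z)⁻¹ • z ∈ K := by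
    rw [← hKc.closure_eq, ← gauge_le_one_iff_mem_closure hK hK0, hKc.closure_eq,
      gauge_smul_of_nonneg (inv_nonneg.2 hKpos.le), smul_eq_mul, inv_mul_cancel₀ hKpos.ne']
  have hwL := interior_subset_gauge_lt_one L (hKL hw)
  rw [mem_ofPred_eq, gauge_smul_of_nonneg (inv_nonneg.2 hKpos.le), smul_eq_mul,
    inv_mul_lt_iff₀ hKpos, mul_one] at hwL
  exact ⟨hLpos, hwL⟩

/-- As `l` runs through `[0, 1]`, `annulusPoint K L z l` runs along the ray through `z` from the
boundary of `K` to the boundary of `L`. -/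
noncomputable def annulusPoint (K L : Set E) (z : E) (l : ℝ) : E :=
  ((1 - l) * gauge K z + l * gauge L z)⁻¹ • z

theorem continuousOn_annulusPoint (hK : Convex ℝ K) (hKc : IsClosed K) (hK0 : K ∈ 𝓝 0)
    (hL : Convex ℝ L) (hLb : Bornology.IsBounded L) (hKL : K ⊆ interior L) :
    ContinuousOn (fun x : E × ℝ => annulusPoint K L x.1 x.2) ({0}ᶜ ×ˢ Icc 0 1) := by
  have hL0 : L ∈ 𝓝 (0 : E) := mem_of_superset hK0 (hKL.trans interior_subset)
  have hgK := continuous_gauge hK hK0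
  have hgL := continuous_gauge hL hL0
  refine ContinuousOn.smul (ContinuousOn.inv₀ (by fun_prop) ?_) continuousOn_fst
  rintro ⟨z, l⟩ ⟨hz, hl0, hl1⟩
  obtain ⟨hpos, hlt⟩ := gauge_lt_gauge_of_subset_interior hK hKc hK0 hLb hKL hz
  dsimp only
  nlinarith

theorem annulusPoint_mem_diff (hK : Convex ℝ K) (hKc : IsClosed K) (hK0 : K ∈ 𝓝 0)
    (hL : Convex ℝ L) (hLb : Bornology.IsBounded L) (hKL : K ⊆ interior L) {z : E} (hz : z ≠ 0)
    {l : ℝ} (hl : l ∈ Ioo 0 1) : annulusPoint K L z l ∈ L \ K := by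
  have hL0 : L ∈ 𝓝 (0 : E) := mem_of_superset hK0 (hKL.trans interior_subset)
  obtain ⟨hpos, hlt⟩ := gauge_lt_gauge_of_subset_interior hK hKc hK0 hLb hKL hz
  obtain ⟨hl0, hl1⟩ := hl
  set ρ := (1 - l) * gauge K z + l * gauge L z
  have hρL : gauge L z < ρ := by nlinarith
  have hρK : ρ < gauge K z := by nlinarith
  have hρ : 0 < ρ := hpos.trans hρL
  have hgauge : ∀ S : Set E, gauge S (annulusPoint K L z l) = ρ⁻¹ * gauge S z := fun S => by
    rw [annulusPoint, gauge_smul_of_nonneg (inv_nonneg.2 hρ.le), smul_eq_mul]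
  refine ⟨interior_subset ((gauge_lt_one_iff_mem_interior hL hL0).1 ?_), fun hmem => ?_⟩
  · rwa [hgauge, inv_mul_lt_iff₀ hρ, mul_one]
  · have := gauge_le_one_of_mem hmem
    rw [hgauge, inv_mul_le_iff₀ hρ, mul_one] at this
    exact this.not_gt hρK

theorem annulusPoint_injective (hK : Convex ℝ K) (hKc : IsClosed K) (hK0 : K ∈ 𝓝 0)
    (hLb : Bornology.IsBounded L) (hKL : K ⊆ interior L) {z z' : E} (hz : z ≠ 0) (hz' : z' ≠ 0)
    (hzz' : ‖z‖ = ‖z'‖) {l l' : ℝ} (hl : l ∈ Icc 0 1) (hl' : l' ∈ Icc 0 1)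
    (h : annulusPoint K L z l = annulusPoint K L z' l') : z = z' ∧ l = l' := by
  obtain ⟨hpos, hlt⟩ := gauge_lt_gauge_of_subset_interior hK hKc hK0 hLb hKL hz
  obtain ⟨hpos', hlt'⟩ := gauge_lt_gauge_of_subset_interior hK hKc hK0 hLb hKL hz'
  have hρ : 0 < (1 - l) * gauge K z + l * gauge L z := by nlinarith [hl.1, hl.2]
  have hρ' : 0 < (1 - l') * gauge K z' + l' * gauge L z' := by nlinarith [hl'.1, hl'.2]
  unfold annulusPoint at h
  have hnorm := congrArg norm h
  rw [norm_smul, norm_smul, hzz', Real.norm_of_nonneg (inv_nonneg.2 hρ.le),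
    Real.norm_of_nonneg (inv_nonneg.2 hρ'.le)] at hnorm
  have hinv := mul_right_cancel₀ (norm_ne_zero_iff.2 hz') hnorm
  rw [hinv] at h
  obtain rfl := smul_right_injective E (inv_pos.2 hρ').ne' h
  refine ⟨rfl, ?_⟩
  have hmix := inv_injective hinv
  have hne : gauge L z - gauge K z ≠ 0 := (sub_neg.2 hlt).ne
  exact mul_right_cancel₀ hne (by linarith)

theorem exists_annulusPoint_smul_eq (hK : Convex ℝ K) (hKc : IsClosed K) (hK0 : K ∈ 𝓝 0)
    (hLb : Bornology.IsBounded L) (hKL : K ⊆ interior L) {z : E} (hzK : z ∉ K)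
    (hzL : z ∈ interior L) {c : ℝ} (hc : 0 < c) :
    ∃ l ∈ Ioo 0 1, annulusPoint K L (c • z) l = z := by
  have hz : z ≠ 0 := by rintro rfl; exact hzK (mem_of_mem_nhds hK0)
  obtain ⟨-, hlt⟩ := gauge_lt_gauge_of_subset_interior hK hKc hK0 hLb hKL hz
  have hK1 : 1 < gauge K z := by
    by_contra! h
    exact hzK (hKc.closure_eq ▸ (gauge_le_one_iff_mem_closure hK hK0).1 h)
  have hL1 : gauge L z < 1 := interior_subset_gauge_lt_one L hzL
  refine ⟨(gauge K z - 1) / (gauge K z - gauge L z),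
    ⟨div_pos (by linarith) (by linarith), (div_lt_one (by linarith)).2 (by linarith)⟩, ?_⟩
  have hmix : (1 - (gauge K z - 1) / (gauge K z - gauge L z)) * gauge K (c • z) +
      (gauge K z - 1) / (gauge K z - gauge L z) * gauge L (c • z) = c := by
    have hne : gauge K z - gauge L z ≠ 0 := (sub_pos.2 hlt).ne'
    rw [gauge_smul_of_nonneg hc.le, gauge_smul_of_nonneg hc.le, smul_eq_mul, smul_eq_mul]
    field_simp
    ring
  rw [annulusPoint, hmix, smul_smul, inv_mul_cancel₀ hc.ne', one_smul]

theorem exists_isClosed_convex_nonempty_interior_between {Ω U : Set E} (hΩc : IsCompact Ω)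
    (hΩ : Convex ℝ Ω) (hU : IsOpen U) (hUne : U.Nonempty) (hΩU : Ω ⊆ U) :
    ∃ O, IsClosed O ∧ Convex ℝ O ∧ (interior O).Nonempty ∧ Ω ⊆ O ∧ O ⊆ U := by
  obtain ⟨S, hSne, hSc, hS, hΩS, hSU⟩ : ∃ S : Set E, S.Nonempty ∧ IsCompact S ∧ Convex ℝ S ∧
      Ω ⊆ S ∧ S ⊆ U := by
    rcases Ω.eq_empty_or_nonempty with rfl | hΩne
    · obtain ⟨z, hz⟩ := hUne
      exact ⟨{z}, singleton_nonempty z, isCompact_singleton, convex_singleton z, empty_subset _,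
        singleton_subset_iff.2 hz⟩
    · exact ⟨Ω, hΩne, hΩc, hΩ, subset_rfl, hΩU⟩
  obtain ⟨δ, hδ, hδS⟩ := hSc.exists_cthickening_subset_open hU hSU
  exact ⟨Metric.cthickening δ S, Metric.isClosed_cthickening, hS.cthickening δ,
    (hSne.mono (Metric.self_subset_thickening hδ S)).mono
      (Metric.thickening_subset_interior_cthickening δ S),
    hΩS.trans (Metric.self_subset_cthickening S), hδS⟩

end ConvexSets

theorem IsOpen.nonempty_sdiff_of_measure_eq_zero {X : Type*} [TopologicalSpace X]
    [MeasurableSpace X] {μ : Measure X} [μ.IsOpenPosMeasure] {U N : Set X}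
    (hU : IsOpen U) (hne : U.Nonempty) (hN : μ N = 0) : (U \ N).Nonempty := by
  by_contra! h
  have := interior_mono (sdiff_eq_empty.1 h)
  rw [hU.interior_eq, Measure.interior_eq_empty_of_null hN] at this
  exact hne.ne_empty (subset_empty_iff.1 this)

structure DisjointArcs {ι E : Type*} (R Ω : Set E) (p q : ι → E) (γ : ι → ℝ → E)
    [TopologicalSpace E] : Prop where
  continuousOn : ∀ j, ContinuousOn (γ j) (Icc 0 1)
  injOn : ∀ j, InjOn (γ j) (Icc 0 1)
  apply_zero : ∀ j, γ j 0 = p j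
  apply_one : ∀ j, γ j 1 = q j
  image_subset : ∀ j, γ j '' Icc 0 1 ⊆ R
  disjoint : ∀ j, Disjoint (γ j '' Icc 0 1) Ω
  pairwise_disjoint : Pairwise fun i j => Disjoint (γ i '' Icc 0 1) (γ j '' Icc 0 1)

theorem DisjointArcs.map {ι E F : Type*} [TopologicalSpace E] [TopologicalSpace F]
    {R Ω : Set E} {R' Ω' : Set F} {p q : ι → E} {p' q' : ι → F} {γ : ι → ℝ → E} {f : E → F}
    (h : DisjointArcs R Ω p q γ) (hf : Continuous f) (hfi : Injective f) (hR : MapsTo f R R')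
    (hΩ : f ⁻¹' Ω' ⊆ Ω) (hp : ∀ j, f (p j) = p' j) (hq : ∀ j, f (q j) = q' j) :
    DisjointArcs R' Ω' p' q' fun j => f ∘ γ j where
  continuousOn j := hf.comp_continuousOn (h.continuousOn j)
  injOn j := hfi.comp_injOn (h.injOn j)
  apply_zero j := by rw [comp_apply, h.apply_zero, hp]
  apply_one j := by rw [comp_apply, h.apply_one, hq]
  image_subset j := by
    rw [image_comp]
    exact (image_mono (h.image_subset j)).trans hR.image_subset
  disjoint j := by
    rw [image_comp, disjoint_image_left]
    exact (h.disjoint j).mono_right hΩ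
  pairwise_disjoint i j hij := by
    show Disjoint _ _
    rw [image_comp, image_comp, disjoint_image_iff hfi]
    exact h.pairwise_disjoint hij

section Complex

open Complex

variable {n : ℕ} {K L : Set ℂ}

theorem arg_exp_mul_I_of_mem_Ioc {α : ℝ} (hα : α ∈ Ioc (-Real.pi) Real.pi) :
    arg (exp (α * I)) = α := by
  rw [arg_exp_mul_I, toIocMod_eq_self]
  rwa [show -Real.pi + 2 * Real.pi = Real.pi by ring]

theorem annulusPoint_exp_injOn (hK : Convex ℝ K) (hKc : IsClosed K) (hK0 : K ∈ 𝓝 0)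
    (hLb : Bornology.IsBounded L) (hKL : K ⊆ interior L) :
    InjOn (fun x : ℝ × ℝ => annulusPoint K L (exp (x.1 * I)) x.2)
      (Ioc (-Real.pi) Real.pi ×ˢ Icc 0 1) := by
  rintro ⟨α, l⟩ ⟨hα, hl⟩ ⟨α', l'⟩ ⟨hα', hl'⟩ h
  obtain ⟨he, rfl⟩ := annulusPoint_injective hK hKc hK0 hLb hKL (exp_ne_zero _) (exp_ne_zero _)
    (by rw [norm_exp_ofReal_mul_I, norm_exp_ofReal_mul_I]) hl hl' h
  have := congrArg arg he
  rw [arg_exp_mul_I_of_mem_Ioc hα, arg_exp_mul_I_of_mem_Ioc hα'] at this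
  rw [show α = α' from this]

theorem exists_annulusPoint_exp_arg_eq (hK : Convex ℝ K) (hKc : IsClosed K) (hK0 : K ∈ 𝓝 0)
    (hLb : Bornology.IsBounded L) (hKL : K ⊆ interior L) {z : ℂ} (hzK : z ∉ K)
    (hzL : z ∈ interior L) : ∃ l ∈ Ioo 0 1, annulusPoint K L (exp (arg z * I)) l = z := by
  have hz : 0 < ‖z‖ := norm_pos_iff.2 (by rintro rfl; exact hzK (mem_of_mem_nhds hK0))
  have hexp : exp (arg z * I) = ‖z‖⁻¹ • z := by
    rw [real_smul, ofReal_inv, eq_inv_mul_iff_mul_eq₀ (by exact_mod_cast hz.ne'),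
      norm_mul_exp_arg_mul_I]
  rw [hexp]
  exact exists_annulusPoint_smul_eq hK hKc hK0 hLb hKL hzK hzL (inv_pos.2 hz)

theorem mem_affineSpan_pair_of_arg_sub_eq {p p' z : ℂ} (hp : p ≠ z) (hp' : p' ≠ z)
    (hpp' : p ≠ p') (h : arg (p - z) = arg (p' - z)) : z ∈ line[ℝ, p, p'] := by
  rw [arg_eq_arg_iff (sub_ne_zero.2 hp) (sub_ne_zero.2 hp')] at h
  set r : ℝ := ‖p' - z‖ / ‖p - z‖
  have hr : (r : ℂ) * (p - z) = p' - z := by simpa [r] using h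
  have hr1 : (1 - r : ℂ) ≠ 0 := by
    intro h1
    apply hpp'
    linear_combination (p - z) * h1 + hr
  convert AffineMap.lineMap_mem_affineSpan_pair (1 - r)⁻¹ p p' using 1
  rw [AffineMap.lineMap_apply_module, real_smul, real_smul]
  push_cast
  field_simp
  linear_combination hr

theorem affineSpan_pair_ne_top (p p' : ℂ) : line[ℝ, p, p'] ≠ ⊤ := by
  intro h
  have hdim : Module.finrank ℝ (line[ℝ, p, p']).direction =
      Module.finrank ℝ (⊤ : AffineSubspace ℝ ℂ).direction := by rw [h]
  rw [direction_affineSpan, vectorSpan_pair, AffineSubspace.direction_top, finrank_top,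
    finrank_real_complex] at hdim
  have := finrank_span_le_card (R := ℝ) ({p -ᵥ p'} : Set ℂ)
  rw [toFinset_singleton, Finset.card_singleton] at this
  omega

theorem exists_mem_arg_sub_injective {W : Type*} [Finite W] {P : W → ℂ} (hP : Injective P)
    {U : Set ℂ} (hU : IsOpen U) (hne : U.Nonempty) :
    ∃ ω ∈ U, Injective fun w => arg (P w - ω) := by
  set N := ⋃ (w : W) (w' : W) (_ : w ≠ w'), (line[ℝ, P w, P w'] : Set ℂ)
  have hN : volume N = 0 :=
    measure_iUnion_null fun w => measure_iUnion_null fun w' =>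
      measure_iUnion_null fun _ =>
        Measure.addHaar_affineSubspace _ _ (affineSpan_pair_ne_top _ _)
  obtain ⟨ω, hωU, hωN⟩ := hU.nonempty_sdiff_of_measure_eq_zero hne hN
  refine ⟨ω, hωU, fun w w' h => ?_⟩
  by_contra hww'
  have hωN' : ω ∉ line[ℝ, P w, P w'] := fun hω =>
    hωN (mem_iUnion₂.2 ⟨w, w', mem_iUnion.2 ⟨hww', hω⟩⟩)
  refine hωN' (mem_affineSpan_pair_of_arg_sub_eq ?_ ?_ (hP.ne hww') h)
  · rintro h'; exact hωN' (h' ▸ left_mem_affineSpan_pair ℝ _ _)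
  · rintro h'; exact hωN' (h' ▸ right_mem_affineSpan_pair ℝ _ _)

theorem exists_disjointArcs_of_arg_injective (hK : Convex ℝ K) (hKc : IsClosed K)
    (hK0 : K ∈ 𝓝 0) (hL : Convex ℝ L) (hLb : Bornology.IsBounded L) (hKL : K ⊆ interior L)
    {p q : Fin n → ℂ} (harg : Injective (Sum.elim (fun j => arg (p j)) fun j => arg (q j)))
    (hpK : ∀ j, p j ∉ K) (hqK : ∀ j, q j ∉ K) (hpL : ∀ j, p j ∈ interior L)
    (hqL : ∀ j, q j ∈ interior L) : ∃ γ, DisjointArcs L K p q γ := by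
  choose u hu hpu using fun j => exists_annulusPoint_exp_arg_eq hK hKc hK0 hLb hKL (hpK j) (hpL j)
  choose v hv hqv using fun j => exists_annulusPoint_exp_arg_eq hK hKc hK0 hLb hKL (hqK j) (hqL j)
  obtain ⟨H, hHc, hHp, hHq, hH01, hHanti⟩ := exists_strictAnti_interpolating harg hu hv
  set σ : Fin n → ℝ → ℝ := fun j => AffineMap.lineMap (arg (p j)) (arg (q j))
  set Ψ : ℝ × ℝ → ℂ := fun x => annulusPoint K L (exp (x.1 * I)) x.2
  set c : Fin n → ℝ → ℝ × ℝ := fun j t => (σ j t, H j (σ j t))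
  have hc : ∀ j t, t ∈ Icc (0 : ℝ) 1 → c j t ∈ Ioc (-Real.pi) Real.pi ×ˢ Icc 0 1 :=
    fun j t ht => ⟨(convex_Ioc _ _).lineMap_mem (arg_mem_Ioc _) (arg_mem_Ioc _) ht,
      Ioo_subset_Icc_self (hH01 _ _)⟩
  have hΨc : ∀ i j s t, s ∈ Icc (0 : ℝ) 1 → t ∈ Icc (0 : ℝ) 1 → Ψ (c i s) = Ψ (c j t) →
      c i s = c j t := fun i j s t hs ht h =>
    annulusPoint_exp_injOn hK hKc hK0 hLb hKL (hc i s hs) (hc j t ht) h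
  have hmem : ∀ j t, Ψ (c j t) ∈ L \ K := fun j t =>
    annulusPoint_mem_diff hK hKc hK0 hL hLb hKL (exp_ne_zero _) (hH01 _ _)
  refine ⟨fun j => Ψ ∘ c j, ⟨fun j => ?_, fun j s hs t ht h => ?_, fun j => ?_, fun j => ?_,
    fun j => ?_, fun j => ?_, fun i j hij => ?_⟩⟩
  · have hσ : Continuous (σ j) := AffineMap.lineMap_continuous
    have hHj := hHc j
    exact ((continuousOn_annulusPoint hK hKc hK0 hL hLb hKL).comp_continuous
      (f := fun t => (exp (σ j t * I), H j (σ j t))) (by fun_prop)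
      fun t => ⟨exp_ne_zero _, Ioo_subset_Icc_self (hH01 _ _)⟩).continuousOn
  · have hne : arg (p j) ≠ arg (q j) := harg.ne Sum.inl_ne_inr
    exact AffineMap.lineMap_injective ℝ hne (congrArg Prod.fst (hΨc j j s t hs ht h))
  · simp [c, σ, Ψ, hHp, hpu]
  · simp [c, σ, Ψ, hHq, hqv]
  · rintro _ ⟨t, -, rfl⟩
    exact (hmem j t).1
  · rw [disjoint_left]
    rintro _ ⟨t, -, rfl⟩
    exact (hmem j t).2
  · show Disjoint _ _
    rw [disjoint_left]
    rintro _ ⟨s, hs, rfl⟩ ⟨t, ht, hst⟩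
    obtain ⟨hσ, hH⟩ := Prod.mk.inj (hΨc j i t s ht hs hst)
    rw [hσ] at hH
    exact hij ((hHanti _).injective hH).symm

theorem exists_disjointArcs_of_convex {Ω R : Set ℂ} (hΩc : IsCompact Ω) (hΩ : Convex ℝ Ω)
    (hR : Convex ℝ R) (hRb : Bornology.IsBounded R) (hRne : (interior R).Nonempty)
    (hΩR : Ω ⊆ interior R) {p q : Fin n → ℂ} (hpq : Injective (Sum.elim p q))
    (hpΩ : ∀ j, p j ∉ Ω) (hqΩ : ∀ j, q j ∉ Ω) (hpR : ∀ j, p j ∈ interior R)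
    (hqR : ∀ j, q j ∈ interior R) : ∃ γ, DisjointArcs R Ω p q γ := by
  obtain ⟨O, hOc, hO, hOint, hΩO, hOR⟩ := exists_isClosed_convex_nonempty_interior_between hΩc hΩ
    (isOpen_interior.sdiff (finite_range (Sum.elim p q)).isClosed)
    (isOpen_interior.nonempty_sdiff_of_measure_eq_zero hRne ((finite_range _).measure_zero volume))
    fun z hz => ⟨hΩR hz, by rintro ⟨j | j, rfl⟩; exacts [hpΩ j hz, hqΩ j hz]⟩
  obtain ⟨ω, hωO, hωarg⟩ := exists_mem_arg_sub_injective hpq isOpen_interior hOint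
  have hinterior : interior ((ω + ·) ⁻¹' R) = (ω + ·) ⁻¹' interior R :=
    ((Homeomorph.addLeft ω).preimage_interior R).symm
  obtain ⟨γ, hγ⟩ := exists_disjointArcs_of_arg_injective (p := fun j => p j - ω)
    (q := fun j => q j - ω) (hO.translate_preimage_right ω)
    (hOc.preimage (continuous_const_add ω))
    ((continuous_const_add ω).continuousAt.preimage_mem_nhds
      (by rw [add_zero]; exact mem_interior_iff_mem_nhds.1 hωO))
    (hR.translate_preimage_right ω) ((isometry_add_left ω).antilipschitz.isBounded_preimage hRb)
    (hinterior ▸ preimage_mono (hOR.trans sdiff_subset))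
    (by convert hωarg using 1; ext (j | j) <;> rfl)
    (fun j => by simpa using fun h => (hOR h).2 ⟨.inl j, rfl⟩)
    (fun j => by simpa using fun h => (hOR h).2 ⟨.inr j, rfl⟩)
    (fun j => by simpa [hinterior] using hpR j) (fun j => by simpa [hinterior] using hqR j)
  exact ⟨_, hγ.map (continuous_const_add ω) (add_right_injective ω) (fun _ hz => hz)
    (preimage_mono hΩO) (fun j => add_sub_cancel ω _) (fun j => add_sub_cancel ω _)⟩

end Complex

/-- In a rectangle `R = [a,b] × [c,d]`, given `2n` pairwise distinct points
`x₁,…,xₙ,y₁,…,yₙ` in the interior of `R` and a compact convex set `Ω` in the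
interior of `R` containing none of these points, there exist `n` pairwise
disjoint continuous injective curves in `R` avoiding `Ω`, the `j`-th one
joining `xⱼ` to `yⱼ`. -/
theorem disjoint_curves_in_rectangle (a b c d : ℝ) (hab : a < b) (hcd : c < d)
    (n : ℕ) (x y : Fin n → ℝ × ℝ)
    (hx : ∀ j, x j ∈ Set.Ioo a b ×ˢ Set.Ioo c d)
    (hy : ∀ j, y j ∈ Set.Ioo a b ×ˢ Set.Ioo c d)
    (hxinj : Function.Injective x) (hyinj : Function.Injective y)
    (hxy : ∀ i j, x i ≠ y j)
    (Ω : Set (ℝ × ℝ)) (hΩcompact : IsCompact Ω) (hΩconvex : Convex ℝ Ω)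
    (hΩint : Ω ⊆ Set.Ioo a b ×ˢ Set.Ioo c d)
    (hΩx : ∀ j, x j ∉ Ω) (hΩy : ∀ j, y j ∉ Ω) :
    ∃ τ : Fin n → ℝ → ℝ × ℝ,
      (∀ j, ContinuousOn (τ j) (Set.Icc 0 1)) ∧
      (∀ j, Set.InjOn (τ j) (Set.Icc 0 1)) ∧
      (∀ j, τ j 0 = x j) ∧
      (∀ j, τ j 1 = y j) ∧
      (∀ j, τ j '' Set.Icc 0 1 ⊆ Set.Icc a b ×ˢ Set.Icc c d) ∧
      (∀ j, Disjoint (τ j '' Set.Icc 0 1) Ω) ∧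
      (∀ i j, i ≠ j → Disjoint (τ i '' Set.Icc 0 1) (τ j '' Set.Icc 0 1)) := by
  set e := Complex.equivRealProdCLM
  have hR : IsCompact (e ⁻¹' (Icc a b ×ˢ Icc c d)) :=
    e.toHomeomorph.isCompact_preimage.2 (isCompact_Icc.prod isCompact_Icc)
  have hinterior : interior (e ⁻¹' (Icc a b ×ˢ Icc c d)) = e ⁻¹' (Ioo a b ×ˢ Ioo c d) := by
    rw [← e.coe_toHomeomorph, ← Homeomorph.preimage_interior, interior_prod_eq, interior_Icc,
      interior_Icc]
  obtain ⟨γ, hγ⟩ := exists_disjointArcs_of_convex (Ω := e ⁻¹' Ω)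
    (R := e ⁻¹' (Icc a b ×ˢ Icc c d)) (p := e.symm ∘ x) (q := e.symm ∘ y)
    (e.toHomeomorph.isCompact_preimage.2 hΩcompact)
    (hΩconvex.linear_preimage e.toLinearMap)
    (((convex_Icc a b).prod (convex_Icc c d)).linear_preimage e.toLinearMap) hR.isBounded
    (hinterior ▸ ((nonempty_Ioo.2 hab).prod (nonempty_Ioo.2 hcd)).preimage e.surjective)
    (hinterior ▸ preimage_mono hΩint)
    (by rw [← Sum.comp_elim]; exact e.symm.injective.comp (hxinj.sumElim hyinj hxy))
    (fun j => by simpa using hΩx j) (fun j => by simpa using hΩy j)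
    (fun j => by rw [hinterior, comp_apply, mem_preimage, e.apply_symm_apply]; exact hx j)
    (fun j => by rw [hinterior, comp_apply, mem_preimage, e.apply_symm_apply]; exact hy j)
  obtain ⟨hc, hi, h0, h1, hRsub, hΩ, hdisj⟩ := hγ.map e.continuous e.injective (mapsTo_preimage _ _)
    subset_rfl (fun j => e.apply_symm_apply (x j)) (fun j => e.apply_symm_apply (y j))
  exact ⟨_, hc, hi, h0, h1, hRsub, hΩ, hdisj⟩
end
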